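/- arXiv:2412.14911 — 5 statements merged into one kernel-verified Lean document; each statement's English description precedes it below -/
import Mathlib

section
/- In every K-algebra, every element x satisfies x ∨ J₂x = x. -/
/-- The operations of a Bochvar-type algebra ⟨A, ∨, ¬, J₂, 0, 1⟩. -/
class KOps (α : Type*) where
  sup : α → α → α
  neg : α → α
  J : α → α
  zero : α
  one : α

namespace KOps

variable {α : Type*} [KOps α]

/-- The meet, defined à la De Morgan: x ∧ y := ¬(¬x ∨ ¬y). -/
def meet (x y : α) : α := neg (sup (neg x) (neg y))

end KOps

open KOps

/-- A K-algebra: an algebra satisfying the identities K1–K12 axiomatising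
the variety generated by Bochvar algebras. (K5 holds by definition of `meet`.) -/
class KAlgebra (α : Type*) [KOps α] : Prop where
  K1 : ∀ x : α, sup x x = x
  K2 : ∀ x y : α, sup x y = sup y x
  K3 : ∀ x y z : α, sup (sup x y) z = sup x (sup y z)
  K4 : ∀ x : α, neg (neg x) = x
  K5 : ∀ x y : α, meet x y = neg (sup (neg x) (neg y))
  K6 : ∀ x y : α, meet x (sup (neg x) y) = meet x y
  K7 : ∀ x : α, sup zero x = x
  K8 : (one : α) = neg zero
  K9 : ∀ x : α, sup (J x) (neg (J x)) = one
  K10 : ∀ x y : α, sup x (J y) = sup x (J (sup x y))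
  K11 : ∀ x : α, meet x (J x) = x
  K12 : ∀ x : α, J (meet x (neg x)) = zero

namespace KAlgebra

variable {α : Type*} [KOps α] [KAlgebra α]

theorem sup_zero (x : α) : sup x zero = x := by
  rw [K2, K7]

theorem meet_one (x : α) : meet x one = x := by
  rw [K5, K8, K4, sup_zero, K4]

theorem J_zero : J (zero : α) = zero := by
  simpa only [← K8, meet_one] using K12 (zero : α)

end KAlgebra

/-- In every K-algebra, x ∨ J₂x = x. -/
theorem stmt1 {α : Type*} [KOps α] [KAlgebra α] (x : α) : sup x (J x) = x := by
  simpa only [KAlgebra.J_zero, KAlgebra.sup_zero] using (KAlgebra.K10 x zero).symm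
end

section
/- In every K-algebra, every element x satisfies x = J₂x ∨ (x ∧ ¬x). -/
open KOps

/-!
Absorption `x ∨ (x ∧ ¬x) = x` together with K10 and K12 gives `x = J₂x ∨ x`. The dual of K6,
`u ∨ (¬u ∧ v) = u ∨ v`, rewrites this as `J₂x ∨ (x ∧ ¬J₂x)`, and `x ∧ ¬J₂x = x ∧ ¬x` because
`¬x = ¬(x ∧ J₂x) = ¬x ∨ ¬J₂x` by K11, so K6 applies.
-/

namespace KAlgebra

variable {α : Type*} [KOps α] [KAlgebra α]

theorem neg_injective : Function.Injective (neg : α → α) :=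
  Function.LeftInverse.injective K4

theorem neg_sup (x y : α) : neg (sup x y) = meet (neg x) (neg y) := by
  rw [K5, K4, K4]

theorem neg_meet (x y : α) : neg (meet x y) = sup (neg x) (neg y) := by
  rw [K5, K4]

theorem meet_comm (x y : α) : meet x y = meet y x := by
  rw [K5, K5, K2]

theorem sup_meet_neg_left (x y : α) : sup x (meet (neg x) y) = sup x y := by
  apply neg_injective
  rw [neg_sup, neg_meet, K4, neg_sup]
  simpa only [K4] using K6 (neg x) (neg y)

theorem sup_meet_self_neg_self (x : α) : sup x (meet x (neg x)) = x := by
  rw [meet_comm, sup_meet_neg_left, K1]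

theorem sup_J_self (x : α) : sup x (J x) = x :=
  calc sup x (J x)
      = sup x (J (sup x (meet x (neg x)))) := by rw [sup_meet_self_neg_self]
    _ = sup x (J (meet x (neg x))) := (K10 _ _).symm
    _ = x := by rw [K12, K2, K7]

theorem meet_neg_self_eq_meet_neg_J (x : α) : meet x (neg x) = meet x (neg (J x)) :=
  calc meet x (neg x)
      = meet x (neg (meet x (J x))) := by rw [K11]
    _ = meet x (sup (neg x) (neg (J x))) := by rw [neg_meet]
    _ = meet x (neg (J x)) := K6 _ _

end KAlgebra

open KAlgebra in
/-- In every K-algebra, x = J₂x ∨ (x ∧ ¬x). -/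
theorem stmt2 {α : Type*} [KOps α] [KAlgebra α] (x : α) :
    x = sup (J x) (meet x (neg x)) :=
  calc x = sup (J x) x := by rw [K2, sup_J_self]
    _ = sup (J x) (meet (neg (J x)) x) := (sup_meet_neg_left _ _).symm
    _ = sup (J x) (meet x (neg x)) := by rw [meet_comm, meet_neg_self_eq_meet_neg_J]
end

section
/- In every K-algebra, every pair of elements x, y satisfies x ∨ ¬J₂y = x ∨ ¬J₂(x ∨ y). -/
open KOps

namespace KAlgebra

variable {α : Type*} [KOps α] [KAlgebra α]

theorem sup_neg_sup (x y : α) : sup x (neg (sup x y)) = sup x (neg y) := by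
  simpa only [meet, K4] using congrArg neg (K6 (neg x) y)

end KAlgebra

/-- In every K-algebra, x ∨ ¬J₂y = x ∨ ¬J₂(x ∨ y). -/
theorem stmt4 {α : Type*} [KOps α] [KAlgebra α] (x y : α) :
    sup x (neg (J y)) = sup x (neg (J (sup x y))) := by
  rw [← KAlgebra.sup_neg_sup x (J y), KAlgebra.K10, KAlgebra.sup_neg_sup]
end

section
/- A K-algebra satisfies J₂x = x for all x if and only if it satisfies x ∧ ¬x = 0 for all x (i.e., its ⟨∨,¬,0,1⟩-reduct is a Boolean algebra). -/
open KOps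

/-! In every K-algebra `J₂0 = 0`, so K10 with `y = 0` gives `x ∨ J₂x = x`. When `x ∨ ¬x = 1`,
this yields `x ∨ ¬J₂x = 1` by K9, hence `J₂x ∧ x = J₂x ∧ (¬J₂x ∨ x) = J₂x` by K6, and K11
turns this into `J₂x = x`. Conversely `J₂x = x` turns K12 into `x ∧ ¬x = 0`. -/

namespace KAlgebra

variable {α : Type*} [KOps α] [KAlgebra α]

theorem sup_neg_self_of_meet_neg_self {x : α} (h : meet x (neg x) = zero) :
    sup x (neg x) = one := by
  rw [K8, ← h, K5, K4, K4, K2]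

theorem sup_one_of_sup_neg_self {x : α} (h : sup x (neg x) = one) : sup x one = one := by
  rw [← h, ← K3, K1]

theorem J_meet_self {x : α} (h : sup x one = one) : meet (J x) x = J x := by
  have hx : sup (neg (J x)) x = one :=
    calc sup (neg (J x)) x = sup (sup x (J x)) (neg (J x)) := by rw [sup_J_self, K2]
      _ = one := by rw [K3, K9, h]
  rw [← K6, hx, meet_one]

theorem J_eq_self {x : α} (h : sup x one = one) : J x = x := by
  rw [← J_meet_self h, meet_comm, K11]

end KAlgebra

/-- A K-algebra satisfies J₂x = x for all x iff it satisfies x ∧ ¬x = 0 for all x. -/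
theorem stmt10 {α : Type*} [KOps α] [KAlgebra α] :
    (∀ x : α, J x = x) ↔ (∀ x : α, meet x (neg x) = zero) := by
  constructor
  · intro hJ x
    simpa only [hJ] using KAlgebra.K12 x
  · intro hmeet x
    exact KAlgebra.J_eq_self
      (KAlgebra.sup_one_of_sup_neg_self (KAlgebra.sup_neg_self_of_meet_neg_self (hmeet x)))
end

section
/- In a K-algebra A, an element a belongs to D(A) := {x : J₂x = 0} if and only if there exists b with a = b ∧ ¬b. -/
open KOps

/-!
If `J a = 0`, then `j := J (¬a ∨ a)` is absorbed by `¬a` (K10), so `j ≤ ¬a` in the join order.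
Splitting `1 = j ∨ ¬j` (K9) turns `a = a ∧ J a = a ∧ 0` into `a ∧ j`, and K6 replaces `j` by `¬a`.
-/

namespace KAlgebra

variable {α : Type*} [KOps α] [KAlgebra α]

theorem sup_J_sup_of_J_eq_zero {y : α} (hy : J y = zero) (x : α) : sup x (J (sup x y)) = x := by
  rw [← K10, hy, sup_zero]

theorem meet_zero_eq_meet_J {x z : α} (h : sup (neg x) (J z) = neg x) :
    meet x zero = meet x (J z) := by
  have hone : sup (neg x) one = sup (neg x) (neg (J z)) := by
    rw [← K9 z, ← K3, h]
  rw [K5, K5, ← K8, hone]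

theorem meet_eq_meet_neg_of_sup_eq {x y : α} (h : sup (neg x) y = neg x) :
    meet x y = meet x (neg x) := by
  rw [← K6, h]

theorem eq_meet_neg_self_of_J_eq_zero {a : α} (ha : J a = zero) : a = meet a (neg a) := by
  have hj : sup (neg a) (J (sup (neg a) a)) = neg a := sup_J_sup_of_J_eq_zero ha (neg a)
  calc a = meet a (J a) := (K11 a).symm
    _ = meet a zero := by rw [ha]
    _ = meet a (J (sup (neg a) a)) := meet_zero_eq_meet_J hj
    _ = meet a (neg a) := meet_eq_meet_neg_of_sup_eq hj

end KAlgebra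

/-- a ∈ D(A) iff a = b ∧ ¬b for some b. -/
theorem stmt13 {α : Type*} [KOps α] [KAlgebra α] (a : α) :
    a ∈ {x : α | J x = zero} ↔ ∃ b : α, a = meet b (neg b) := by
  constructor
  · intro ha
    exact ⟨a, KAlgebra.eq_meet_neg_self_of_J_eq_zero ha⟩
  · rintro ⟨b, rfl⟩
    exact KAlgebra.K12 b
end
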